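/- arXiv:2001.02798 — 2 statements merged into one kernel-verified Lean document; each statement's English description precedes it below -/
import Mathlib

section
/- Let ν be a probability measure on S, let θ₁,…,θ_{N'} ∈ Θ and N ≤ N'. Suppose β^N ∈ ℝ^{N+1} is optimal to FALP_N (i.e. V(β^N) satisfies the ALP (Bellman) constraints and ∫_S V(β^N) dν ≥ ∫_S V(β) dν for every β ∈ ℝ^{N+1} whose value function, built from θ₁,…,θ_N, satisfies the ALP constraints) and β^{N'} ∈ ℝ^{N'+1} is optimal to FALP_{N'} (built from θ₁,…,θ_{N'}). Then ∫_S |V* − V(β^{N'})| dν ≤ ∫_S |V* − V(β^N)| dν. -/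
/-!
A function satisfying the ALP constraints is a pointwise lower bound on `V*`: if `D` bounds
`V - V*` from above, then at each state, choosing a near-optimal action in the Bellman
equation gives `V - V* ≤ γ D`, so `sup (V - V*) ≤ γ sup (V - V*)` and hence `V ≤ V*`.
On feasible functions the `(1,ν)`-distance to `V*` is therefore `∫ V* dν - ∫ V dν`, which
the FALP objective minimises. Padding `β^N` with zeros gives a feasible point of FALP_{N'}
with the same value function, so the optimum of FALP_{N'} is at least as close to `V*`.
-/

open MeasureTheory ProbabilityTheory

/-- The random basis function `φ(s;θ) = φ̄(⟨(1,s), θ⟩)`. -/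
noncomputable def phi (d : ℕ) (phibar : ℝ → ℝ)
    (θ : EuclideanSpace ℝ (Fin (d + 1))) (s : EuclideanSpace ℝ (Fin d)) : ℝ :=
  phibar (θ 0 + ∑ i : Fin d, s i * θ i.succ)

section BellmanFeasible

variable {S A : Type*} [MeasurableSpace S] [MeasurableSpace A]

def BellmanFeasible (Act : S → Set A) (c : S × A → ℝ) (γ : ℝ) (P : Kernel (S × A) S)
    (V : S → ℝ) : Prop :=
  ∀ s, ∀ a ∈ Act s, V s - γ * ∫ s', V s' ∂(P (s, a)) ≤ c (s, a)

variable {Act : S → Set A} {c : S × A → ℝ} {γ : ℝ} {P : Kernel (S × A) S} [IsMarkovKernel P]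
  {V Vstar : S → ℝ}

lemma Measurable.integrable_of_abs_le {f : S → ℝ} (hf : Measurable f) {M : ℝ}
    (hM : ∀ s, |f s| ≤ M) (μ : Measure S) [IsFiniteMeasure μ] : Integrable f μ :=
  Integrable.of_bound hf.aestronglyMeasurable M (ae_of_all _ hM)

lemma BellmanFeasible.sub_le_mul (hV : BellmanFeasible Act c γ P V)
    (hAct : ∀ s, (Act s).Nonempty) (hγ0 : 0 ≤ γ)
    (hBellman : ∀ s, Vstar s = ⨅ a : Act s, (c (s, (a : A)) + γ * ∫ s', Vstar s' ∂(P (s, a))))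
    (hVi : ∀ p, Integrable V (P p)) (hVstari : ∀ p, Integrable Vstar (P p))
    {D : ℝ} (hD : ∀ s, V s - Vstar s ≤ D) (s : S) : V s - Vstar s ≤ γ * D := by
  refine le_of_forall_pos_le_add fun ε hε => ?_
  have : Nonempty (Act s) := (hAct s).to_subtype
  obtain ⟨a, ha⟩ : ∃ a : Act s, c (s, a) + γ * ∫ s', Vstar s' ∂(P (s, a)) < Vstar s + ε :=
    exists_lt_of_ciInf_lt (by rw [← hBellman s]; linarith)
  have hmean : ∫ s', V s' ∂(P (s, a)) - ∫ s', Vstar s' ∂(P (s, a)) ≤ D := by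
    rw [← integral_sub (hVi _) (hVstari _)]
    calc _ ≤ ∫ _, D ∂(P (s, a)) :=
          integral_mono ((hVi _).sub (hVstari _)) (integrable_const D) hD
      _ = D := by simp
  nlinarith [hV s a a.2, mul_le_mul_of_nonneg_left hmean hγ0]

lemma BellmanFeasible.le_of_bellman (hV : BellmanFeasible Act c γ P V)
    (hAct : ∀ s, (Act s).Nonempty) (hγ0 : 0 ≤ γ) (hγ1 : γ < 1)
    (hBellman : ∀ s, Vstar s = ⨅ a : Act s, (c (s, (a : A)) + γ * ∫ s', Vstar s' ∂(P (s, a))))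
    (hV_meas : Measurable V) (hV_bdd : ∃ M, ∀ s, |V s| ≤ M)
    (hVstar_meas : Measurable Vstar) (hVstar_bdd : ∃ M, ∀ s, |Vstar s| ≤ M) (s : S) :
    V s ≤ Vstar s := by
  obtain ⟨M, hM⟩ := hV_bdd
  obtain ⟨M', hM'⟩ := hVstar_bdd
  have : Nonempty S := ⟨s⟩
  have hbdd : BddAbove (Set.range fun s => V s - Vstar s) := by
    refine ⟨M + M', ?_⟩
    rintro _ ⟨s, rfl⟩
    linarith [(abs_le.1 (hM s)).2, (abs_le.1 (hM' s)).1]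
  set D := ⨆ s, (V s - Vstar s)
  have hD : ∀ s, V s - Vstar s ≤ D := le_ciSup hbdd
  have hDγ : D ≤ γ * D := ciSup_le <| hV.sub_le_mul hAct hγ0 hBellman
    (fun _ => hV_meas.integrable_of_abs_le hM _) (fun _ => hVstar_meas.integrable_of_abs_le hM' _) hD
  nlinarith [hD s]

end BellmanFeasible

lemma integral_abs_sub_le_of_le {X : Type*} [MeasurableSpace X] {μ : Measure X} {f g g' : X → ℝ}
    (hf : Integrable f μ) (hg : Integrable g μ) (hg' : Integrable g' μ)
    (hgf : ∀ x, g x ≤ f x) (hg'f : ∀ x, g' x ≤ f x) (h : ∫ x, g x ∂μ ≤ ∫ x, g' x ∂μ) :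
    ∫ x, |f x - g' x| ∂μ ≤ ∫ x, |f x - g x| ∂μ := by
  simp only [abs_of_nonneg (sub_nonneg.2 (hgf _)), abs_of_nonneg (sub_nonneg.2 (hg'f _))]
  rw [integral_sub hf hg', integral_sub hf hg]
  linarith

section RandomFeatures

variable {d : ℕ} {phibar : ℝ → ℝ} {ι : Type*} [Fintype ι]

/-- The paper's `V(β)` for the samples `θ`, with `β = (β₀, β)`. -/
noncomputable def falpValue (phibar : ℝ → ℝ) (θ : ι → EuclideanSpace ℝ (Fin (d + 1))) (β₀ : ℝ)
    (β : ι → ℝ) (x : EuclideanSpace ℝ (Fin d)) : ℝ :=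
  β₀ + ∑ i, β i * phi d phibar (θ i) x

lemma continuous_falpValue (hφ : Continuous phibar) (θ : ι → EuclideanSpace ℝ (Fin (d + 1)))
    (β₀ : ℝ) (β : ι → ℝ) : Continuous (falpValue phibar θ β₀ β) := by
  unfold falpValue phi
  fun_prop

lemma abs_falpValue_le (hφ : ∀ x, |phibar x| ≤ 1) (θ : ι → EuclideanSpace ℝ (Fin (d + 1)))
    (β₀ : ℝ) (β : ι → ℝ) (x : EuclideanSpace ℝ (Fin d)) :
    |falpValue phibar θ β₀ β x| ≤ |β₀| + ∑ i, |β i| := by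
  calc |falpValue phibar θ β₀ β x| ≤ |β₀| + ∑ i, |β i * phi d phibar (θ i) x| :=
        (abs_add_le _ _).trans (add_le_add_right (Finset.abs_sum_le_sum_abs _ _) _)
    _ ≤ |β₀| + ∑ i, |β i| := by
        refine add_le_add_right (Finset.sum_le_sum fun i _ => ?_) _
        rw [abs_mul]
        exact mul_le_of_le_one_right (abs_nonneg _) (hφ _)

lemma falpValue_extend_zero {κ : Type*} [Fintype κ] {e : ι → κ} (he : Function.Injective e)
    (θ : κ → EuclideanSpace ℝ (Fin (d + 1))) (β₀ : ℝ) (β : ι → ℝ) :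
    falpValue phibar θ β₀ (Function.extend e β 0) = falpValue phibar (θ ∘ e) β₀ β := by
  ext x
  unfold falpValue
  congr 1
  refine (Fintype.sum_of_injective e he _ _ (fun j hj => ?_) (fun i => ?_)).symm
  · rw [Function.extend_apply' _ _ _ hj, Pi.zero_apply, zero_mul]
  · rw [he.extend_apply, Function.comp_apply]

end RandomFeatures

theorem stmt_4_general
    {d : ℕ} (Sset : Set (EuclideanSpace ℝ (Fin d)))
    {A : Type*} [MeasurableSpace A]
    (Act : ↥Sset → Set A) (hAct : ∀ s, (Act s).Nonempty)
    (c : ↥Sset × A → ℝ)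
    (γ : ℝ) (hγ0 : 0 ≤ γ) (hγ1 : γ < 1)
    (P : Kernel (↥Sset × A) ↥Sset) [IsMarkovKernel P]
    (Vstar : ↥Sset → ℝ) (hVstar_meas : Measurable Vstar)
    (hVstar_bdd : ∃ M, ∀ s, |Vstar s| ≤ M)
    (hBellman : ∀ s : ↥Sset,
      Vstar s = ⨅ a : Act s, (c (s, (a : A)) + γ * ∫ s', Vstar s' ∂(P (s, (a : A)))))
    (L : NNReal) (phibar : ℝ → ℝ) (hLip : LipschitzWith L phibar)
    (hphibar_bdd : ∀ x, |phibar x| ≤ 1)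
    (ν : Measure ↥Sset) [IsProbabilityMeasure ν]
    (N N' : ℕ) (hNN' : N ≤ N') (θ : Fin N' → EuclideanSpace ℝ (Fin (d + 1)))
    (βN₀ : ℝ) (βN : Fin N → ℝ)
    (hβN_feas : ∀ s : ↥Sset, ∀ a ∈ Act s,
      (βN₀ + ∑ i : Fin N, βN i * phi d phibar (θ (Fin.castLE hNN' i)) (s : EuclideanSpace ℝ (Fin d)))
        - γ * ∫ s', (βN₀ + ∑ i : Fin N,
            βN i * phi d phibar (θ (Fin.castLE hNN' i)) (s' : EuclideanSpace ℝ (Fin d))) ∂(P (s, a))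
        ≤ c (s, a))
    (βN'₀ : ℝ) (βN' : Fin N' → ℝ)
    (hβN'_feas : ∀ s : ↥Sset, ∀ a ∈ Act s,
      (βN'₀ + ∑ i : Fin N', βN' i * phi d phibar (θ i) (s : EuclideanSpace ℝ (Fin d)))
        - γ * ∫ s', (βN'₀ + ∑ i : Fin N',
            βN' i * phi d phibar (θ i) (s' : EuclideanSpace ℝ (Fin d))) ∂(P (s, a))
        ≤ c (s, a))
    (hβN'_opt : ∀ (β₀ : ℝ) (β : Fin N' → ℝ),
      (∀ s : ↥Sset, ∀ a ∈ Act s,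
        (β₀ + ∑ i : Fin N', β i * phi d phibar (θ i) (s : EuclideanSpace ℝ (Fin d)))
          - γ * ∫ s', (β₀ + ∑ i : Fin N',
              β i * phi d phibar (θ i) (s' : EuclideanSpace ℝ (Fin d))) ∂(P (s, a))
          ≤ c (s, a)) →
      ∫ s, (β₀ + ∑ i : Fin N', β i * phi d phibar (θ i) (s : EuclideanSpace ℝ (Fin d))) ∂ν
        ≤ ∫ s, (βN'₀ + ∑ i : Fin N', βN' i * phi d phibar (θ i) (s : EuclideanSpace ℝ (Fin d))) ∂ν) :
    ∫ s, |Vstar s - (βN'₀ + ∑ i : Fin N', βN' i * phi d phibar (θ i) (s : EuclideanSpace ℝ (Fin d)))| ∂ν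
      ≤ ∫ s, |Vstar s - (βN₀ + ∑ i : Fin N, βN i * phi d phibar (θ (Fin.castLE hNN' i)) (s : EuclideanSpace ℝ (Fin d)))| ∂ν := by
  set W := fun s : ↥Sset => falpValue phibar (θ ∘ Fin.castLE hNN') βN₀ βN s
  set W' := fun s : ↥Sset => falpValue phibar θ βN'₀ βN' s
  have hW_bdd (s : ↥Sset) := abs_falpValue_le hphibar_bdd (θ ∘ Fin.castLE hNN') βN₀ βN s
  have hW'_bdd (s : ↥Sset) := abs_falpValue_le hphibar_bdd θ βN'₀ βN' s
  have hW_meas : Measurable W :=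
    (continuous_falpValue hLip.continuous _ _ _).measurable.comp measurable_subtype_coe
  have hW'_meas : Measurable W' :=
    (continuous_falpValue hLip.continuous _ _ _).measurable.comp measurable_subtype_coe
  have hW_le := BellmanFeasible.le_of_bellman hβN_feas hAct hγ0 hγ1 hBellman hW_meas
    ⟨_, hW_bdd⟩ hVstar_meas hVstar_bdd
  have hW'_le := BellmanFeasible.le_of_bellman hβN'_feas hAct hγ0 hγ1 hBellman hW'_meas
    ⟨_, hW'_bdd⟩ hVstar_meas hVstar_bdd
  have hpad := falpValue_extend_zero (phibar := phibar) (Fin.castLE_injective hNN') θ βN₀ βN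
  have hpad_feas : BellmanFeasible Act c γ P fun s : ↥Sset =>
      falpValue phibar θ βN₀ (Function.extend (Fin.castLE hNN') βN 0) s := by
    rw [hpad]
    exact hβN_feas
  have hWW' : ∫ s, W s ∂ν ≤ ∫ s, W' s ∂ν := by
    have h : ∫ s, falpValue phibar θ βN₀ (Function.extend (Fin.castLE hNN') βN 0) s ∂ν
        ≤ ∫ s, W' s ∂ν := hβN'_opt _ _ hpad_feas
    rwa [hpad] at h
  obtain ⟨Mstar, hMstar⟩ := hVstar_bdd
  exact integral_abs_sub_le_of_le (hVstar_meas.integrable_of_abs_le hMstar ν)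
    (hW_meas.integrable_of_abs_le hW_bdd ν) (hW'_meas.integrable_of_abs_le hW'_bdd ν)
    hW_le hW'_le hWW'

/-- Adding random basis functions weakly improves the `(1,ν)`-norm
distance of optimal FALP VFAs to `V*`: if `β^N` is optimal to FALP_N (using the first `N`
of the `N'` samples) and `β^{N'}` is optimal to FALP_{N'}, then
`∫ |V* − V(β^{N'})| dν ≤ ∫ |V* − V(β^N)| dν`. -/
theorem stmt_4
    {d : ℕ} (Sset : Set (EuclideanSpace ℝ (Fin d)))
    {A : Type*} [MeasurableSpace A]
    (Act : ↥Sset → Set A) (hAct : ∀ s, (Act s).Nonempty)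
    (c : ↥Sset × A → ℝ) (hc_meas : Measurable c) (hc_bdd : ∃ M, ∀ p, |c p| ≤ M)
    (γ : ℝ) (hγ0 : 0 ≤ γ) (hγ1 : γ < 1)
    (P : Kernel (↥Sset × A) ↥Sset) [IsMarkovKernel P]
    (Vstar : ↥Sset → ℝ) (hVstar_meas : Measurable Vstar)
    (hVstar_bdd : ∃ M, ∀ s, |Vstar s| ≤ M)
    (hBellman : ∀ s : ↥Sset,
      Vstar s = ⨅ a : Act s, (c (s, (a : A)) + γ * ∫ s', Vstar s' ∂(P (s, (a : A)))))
    (L : NNReal) (phibar : ℝ → ℝ) (hLip : LipschitzWith L phibar)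
    (hphibar_bdd : ∀ x, |phibar x| ≤ 1)
    (ν : Measure ↥Sset) [IsProbabilityMeasure ν]
    (N N' : ℕ) (hNN' : N ≤ N') (θ : Fin N' → EuclideanSpace ℝ (Fin (d + 1)))
    (βN₀ : ℝ) (βN : Fin N → ℝ)
    (hβN_feas : ∀ s : ↥Sset, ∀ a ∈ Act s,
      (βN₀ + ∑ i : Fin N, βN i * phi d phibar (θ (Fin.castLE hNN' i)) (s : EuclideanSpace ℝ (Fin d)))
        - γ * ∫ s', (βN₀ + ∑ i : Fin N,
            βN i * phi d phibar (θ (Fin.castLE hNN' i)) (s' : EuclideanSpace ℝ (Fin d))) ∂(P (s, a))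
        ≤ c (s, a))
    (hβN_opt : ∀ (β₀ : ℝ) (β : Fin N → ℝ),
      (∀ s : ↥Sset, ∀ a ∈ Act s,
        (β₀ + ∑ i : Fin N, β i * phi d phibar (θ (Fin.castLE hNN' i)) (s : EuclideanSpace ℝ (Fin d)))
          - γ * ∫ s', (β₀ + ∑ i : Fin N,
              β i * phi d phibar (θ (Fin.castLE hNN' i)) (s' : EuclideanSpace ℝ (Fin d))) ∂(P (s, a))
          ≤ c (s, a)) →
      ∫ s, (β₀ + ∑ i : Fin N, β i * phi d phibar (θ (Fin.castLE hNN' i)) (s : EuclideanSpace ℝ (Fin d))) ∂ν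
        ≤ ∫ s, (βN₀ + ∑ i : Fin N, βN i * phi d phibar (θ (Fin.castLE hNN' i)) (s : EuclideanSpace ℝ (Fin d))) ∂ν)
    (βN'₀ : ℝ) (βN' : Fin N' → ℝ)
    (hβN'_feas : ∀ s : ↥Sset, ∀ a ∈ Act s,
      (βN'₀ + ∑ i : Fin N', βN' i * phi d phibar (θ i) (s : EuclideanSpace ℝ (Fin d)))
        - γ * ∫ s', (βN'₀ + ∑ i : Fin N',
            βN' i * phi d phibar (θ i) (s' : EuclideanSpace ℝ (Fin d))) ∂(P (s, a))
        ≤ c (s, a))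
    (hβN'_opt : ∀ (β₀ : ℝ) (β : Fin N' → ℝ),
      (∀ s : ↥Sset, ∀ a ∈ Act s,
        (β₀ + ∑ i : Fin N', β i * phi d phibar (θ i) (s : EuclideanSpace ℝ (Fin d)))
          - γ * ∫ s', (β₀ + ∑ i : Fin N',
              β i * phi d phibar (θ i) (s' : EuclideanSpace ℝ (Fin d))) ∂(P (s, a))
          ≤ c (s, a)) →
      ∫ s, (β₀ + ∑ i : Fin N', β i * phi d phibar (θ i) (s : EuclideanSpace ℝ (Fin d))) ∂ν
        ≤ ∫ s, (βN'₀ + ∑ i : Fin N', βN' i * phi d phibar (θ i) (s : EuclideanSpace ℝ (Fin d))) ∂ν) :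
    ∫ s, |Vstar s - (βN'₀ + ∑ i : Fin N', βN' i * phi d phibar (θ i) (s : EuclideanSpace ℝ (Fin d)))| ∂ν
      ≤ ∫ s, |Vstar s - (βN₀ + ∑ i : Fin N, βN i * phi d phibar (θ (Fin.castLE hNN' i)) (s : EuclideanSpace ℝ (Fin d)))| ∂ν :=
  stmt_4_general Sset Act hAct c γ hγ0 hγ1 P Vstar hVstar_meas hVstar_bdd hBellman L phibar hLip
    hphibar_bdd ν N N' hNN' θ βN₀ βN hβN_feas βN'₀ βN' hβN'_feas hβN'_opt
end

section
/- Let θ₁,…,θ_N ∈ Θ, α > 0, real numbers β₁,…,β_N, and suppose z_i := μ_ρ(B(θ_i,α)) > 0 for each i, where B(θ_i,α) is the closed ball of radius α around θ_i. Define b_α(θ) := Σ_{i=1}^N (β_i/z_i) ρ(θ) 1{‖θ − θ_i‖₂ ≤ α}. Then for every s ∈ S, | ∫_Θ b_α(θ) φ(s;θ) dθ − Σ_{i=1}^N β_i φ(s;θ_i) | ≤ L · (D+1) · α · Σ_{i=1}^N |β_i|. -/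
/-!
On the ball `B(θᵢ, α)` the Lipschitz bound
`|φ(s;θ) - φ(s;θᵢ)| ≤ L ‖(1,s)‖ ‖θ - θᵢ‖ ≤ L (D+1) α` holds, and `(βᵢ/zᵢ) ρ 1_{B(θᵢ,α)}` is `βᵢ`
times a probability density on that ball. So the `i`-th term of `∫ b_α φ(s;·)` is `βᵢ` times a
`ρ`-weighted average of `φ(s;·)` over the ball, which is within `L (D+1) α` of `φ(s;θᵢ)`.
-/

open MeasureTheory ProbabilityTheory

noncomputable def muRho (d : ℕ) (ρ : EuclideanSpace ℝ (Fin (d + 1)) → ℝ) :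
    Measure (EuclideanSpace ℝ (Fin (d + 1))) :=
  volume.withDensity fun θ => ENNReal.ofReal (ρ θ)

section LocalAverage

variable {X : Type*} [MeasurableSpace X] {μ : Measure X} {ρ f : X → ℝ} {C : ℝ}

section

variable {B : Set X}

theorem toReal_withDensity_ofReal_apply (hρ : AEStronglyMeasurable ρ (μ.restrict B))
    (hρ0 : 0 ≤ᵐ[μ.restrict B] ρ) (hB : MeasurableSet B) :
    (μ.withDensity (fun t => ENNReal.ofReal (ρ t)) B).toReal = ∫ t in B, ρ t ∂μ := by
  rw [withDensity_apply _ hB, integral_eq_lintegral_of_nonneg_ae hρ0 hρ]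

theorem integrableOn_of_withDensity_ofReal_ne_top (hρ : AEStronglyMeasurable ρ (μ.restrict B))
    (hρ0 : 0 ≤ᵐ[μ.restrict B] ρ) (hB : MeasurableSet B)
    (hfin : μ.withDensity (fun t => ENNReal.ofReal (ρ t)) B ≠ ⊤) : IntegrableOn ρ B μ := by
  rwa [withDensity_apply _ hB, lintegral_ofReal_ne_top_iff_integrable hρ hρ0] at hfin

variable {c : ℝ}

theorem MeasureTheory.IntegrableOn.mul_of_abs_sub_le (hρ : IntegrableOn ρ B μ)
    (hf : AEStronglyMeasurable f (μ.restrict B)) (hB : MeasurableSet B)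
    (hfc : ∀ t ∈ B, |f t - c| ≤ C) : IntegrableOn (fun t => ρ t * f t) B μ :=
  hρ.mul_bdd (c := |c| + C) hf <| ae_restrict_of_forall_mem hB fun t ht => by
    rw [Real.norm_eq_abs]
    linarith [abs_sub_abs_le_abs_sub (f t) c, hfc t ht]

theorem abs_setIntegral_mul_sub_le (hρ : IntegrableOn ρ B μ) (hρ0 : ∀ t ∈ B, 0 ≤ ρ t)
    (hf : AEStronglyMeasurable f (μ.restrict B)) (hB : MeasurableSet B)
    (hfc : ∀ t ∈ B, |f t - c| ≤ C) :
    |∫ t in B, ρ t * f t ∂μ - (∫ t in B, ρ t ∂μ) * c| ≤ (∫ t in B, ρ t ∂μ) * C := by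
  have hρf := hρ.mul_of_abs_sub_le hf hB hfc
  have hdiff : ∫ t in B, ρ t * f t ∂μ - (∫ t in B, ρ t ∂μ) * c = ∫ t in B, ρ t * (f t - c) ∂μ := by
    rw [← integral_mul_const c, ← integral_sub hρf (hρ.mul_const c)]
    simp only [mul_sub]
  rw [hdiff, ← integral_mul_const C, ← Real.norm_eq_abs]
  refine norm_integral_le_of_norm_le (hρ.mul_const C) (ae_restrict_of_forall_mem hB fun t ht => ?_)
  rw [Real.norm_eq_abs, abs_mul, abs_of_nonneg (hρ0 t ht)]
  exact mul_le_mul_of_nonneg_left (hfc t ht) (hρ0 t ht)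

end

variable {ι : Type*} [Fintype ι] {B : ι → Set X}

theorem abs_integral_sum_indicator_mul_sub_le (hB : ∀ i, MeasurableSet (B i))
    (hρ : ∀ i, IntegrableOn ρ (B i) μ) (hρ0 : ∀ i, ∀ t ∈ B i, 0 ≤ ρ t)
    (hf : AEStronglyMeasurable f μ) (x : ι → X) (hfx : ∀ i, ∀ t ∈ B i, |f t - f (x i)| ≤ C)
    (β z : ι → ℝ) (hz : ∀ i, z i = ∫ t in B i, ρ t ∂μ) (hz_pos : ∀ i, 0 < z i) :
    |∫ t, (∑ i, β i / z i * ρ t * (B i).indicator 1 t) * f t ∂μ - ∑ i, β i * f (x i)|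
      ≤ C * ∑ i, |β i| := by
  have hρf i : IntegrableOn (fun t => ρ t * f t) (B i) μ :=
    (hρ i).mul_of_abs_sub_le hf.restrict (hB i) (hfx i)
  have hsummand i : (fun t => β i / z i * ρ t * (B i).indicator 1 t * f t)
      = (B i).indicator (fun t => β i / z i * (ρ t * f t)) := by
    ext t
    by_cases ht : t ∈ B i <;> simp [ht, mul_assoc]
  have hsplit : ∫ t, (∑ i, β i / z i * ρ t * (B i).indicator 1 t) * f t ∂μ
      = ∑ i, β i / z i * ∫ t in B i, ρ t * f t ∂μ := by
    simp_rw [Finset.sum_mul]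
    rw [integral_finsetSum _ fun i _ => by
      rw [hsummand]; exact (integrable_indicator_iff (hB i)).2 ((hρf i).const_mul _)]
    refine Finset.sum_congr rfl fun i _ => ?_
    rw [hsummand, integral_indicator (hB i), integral_const_mul]
  have hterm i : |β i / z i * ∫ t in B i, ρ t * f t ∂μ - β i * f (x i)| ≤ C * |β i| := by
    have hbound := abs_setIntegral_mul_sub_le (hρ i) (hρ0 i) hf.restrict (hB i) (hfx i)
    rw [← hz i] at hbound
    have hzi := hz_pos i
    calc |β i / z i * ∫ t in B i, ρ t * f t ∂μ - β i * f (x i)|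
        = |β i / z i * (∫ t in B i, ρ t * f t ∂μ - z i * f (x i))| := by
          congr 1; field_simp
      _ = |β i| / z i * |∫ t in B i, ρ t * f t ∂μ - z i * f (x i)| := by
          rw [abs_mul, abs_div, abs_of_pos hzi]
      _ ≤ |β i| / z i * (z i * C) := by gcongr
      _ = C * |β i| := by field_simp
  rw [hsplit, ← Finset.sum_sub_distrib, Finset.mul_sum]
  exact (Finset.abs_sum_le_sum_abs _ _).trans (Finset.sum_le_sum fun i _ => hterm i)

end LocalAverage

namespace EuclideanSpace

noncomputable def consOne {d : ℕ} (s : EuclideanSpace ℝ (Fin d)) :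
    EuclideanSpace ℝ (Fin (d + 1)) :=
  WithLp.toLp 2 (Fin.cons 1 (fun i => s i) : Fin (d + 1) → ℝ)

theorem norm_consOne {d : ℕ} (s : EuclideanSpace ℝ (Fin d)) :
    ‖consOne s‖ = √(1 + ‖s‖ ^ 2) := by
  rw [EuclideanSpace.norm_eq, EuclideanSpace.norm_eq s, Real.sq_sqrt (by positivity),
    Fin.sum_univ_succ]
  simp [consOne]

end EuclideanSpace

open EuclideanSpace

theorem phi_eq_phibar_inner {d : ℕ} (phibar : ℝ → ℝ) (t : EuclideanSpace ℝ (Fin (d + 1)))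
    (s : EuclideanSpace ℝ (Fin d)) : phi d phibar t s = phibar (inner ℝ (consOne s) t) := by
  simp [phi, consOne, PiLp.inner_apply, Fin.sum_univ_succ, mul_comm]

theorem lipschitzWith_phi {d : ℕ} {L : NNReal} {phibar : ℝ → ℝ} (hLip : LipschitzWith L phibar)
    (s : EuclideanSpace ℝ (Fin d)) :
    LipschitzWith (L * ‖consOne s‖₊) fun t => phi d phibar t s := by
  simp only [phi_eq_phibar_inner]
  refine hLip.comp (LipschitzWith.of_dist_le_mul fun t t' => ?_)
  rw [Real.dist_eq, ← inner_sub_right, dist_eq_norm, coe_nnnorm]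
  exact abs_real_inner_le_norm _ _

theorem abs_phi_sub_phi_le {d : ℕ} {L : NNReal} {phibar : ℝ → ℝ} (hLip : LipschitzWith L phibar)
    {s : EuclideanSpace ℝ (Fin d)} {D α : ℝ} (hs : √(1 + ‖s‖ ^ 2) ≤ D + 1)
    {t t' : EuclideanSpace ℝ (Fin (d + 1))} (ht : dist t t' ≤ α) :
    |phi d phibar t s - phi d phibar t' s| ≤ L * (D + 1) * α := by
  have hlip := (lipschitzWith_phi hLip s).dist_le_mul t t'
  rw [Real.dist_eq, NNReal.coe_mul, coe_nnnorm, norm_consOne] at hlip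
  have hD0 : 0 ≤ D + 1 := (Real.sqrt_nonneg _).trans hs
  calc _ ≤ L * √(1 + ‖s‖ ^ 2) * dist t t' := hlip
    _ ≤ L * (D + 1) * α := by gcongr

theorem stmt_12_general
    {d : ℕ} (Sset : Set (EuclideanSpace ℝ (Fin d)))
    (D : ℝ) (hD : ∀ s ∈ Sset, Real.sqrt (1 + ‖s‖ ^ 2) ≤ D + 1)
    (L : NNReal) (phibar : ℝ → ℝ) (hLip : LipschitzWith L phibar)
    (ρ : EuclideanSpace ℝ (Fin (d + 1)) → ℝ) (hρ_meas : Measurable ρ)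
    (hρ_pos : ∀ θ, 0 < ρ θ)
    (N : ℕ) (θ : Fin N → EuclideanSpace ℝ (Fin (d + 1)))
    (α : ℝ)
    (β : Fin N → ℝ)
    (z : Fin N → ℝ)
    (hz : ∀ i, z i = (muRho d ρ (Metric.closedBall (θ i) α)).toReal)
    (hz_pos : ∀ i, 0 < z i)
    (bα : EuclideanSpace ℝ (Fin (d + 1)) → ℝ)
    (hbα : ∀ t, bα t = ∑ i : Fin N, (β i / z i) * ρ t * (if dist t (θ i) ≤ α then 1 else 0)) :
    ∀ s ∈ Sset,
      |(∫ t, bα t * phi d phibar t s) - ∑ i : Fin N, β i * phi d phibar (θ i) s|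
        ≤ (L : ℝ) * (D + 1) * α * ∑ i : Fin N, |β i| := by
  intro s hs
  set B : Fin N → Set (EuclideanSpace ℝ (Fin (d + 1))) := fun i => Metric.closedBall (θ i) α
  have hB i : MeasurableSet (B i) := measurableSet_closedBall
  have hρ0 i : 0 ≤ᵐ[volume.restrict (B i)] ρ := .of_forall fun t => (hρ_pos t).le
  have hz' i : z i = ∫ t in B i, ρ t := by
    rw [hz i, muRho, toReal_withDensity_ofReal_apply hρ_meas.aestronglyMeasurable (hρ0 i) (hB i)]
  -- `0 < z i` rules out `μ_ρ (B i) = ⊤`, whose `toReal` is `0`.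
  have hρ_int i : IntegrableOn ρ (B i) :=
    integrableOn_of_withDensity_ofReal_ne_top hρ_meas.aestronglyMeasurable (hρ0 i) (hB i)
      (ENNReal.toReal_pos_iff.1 (hz i ▸ hz_pos i)).2.ne
  have hbα' : bα = fun t => ∑ i, β i / z i * ρ t * (B i).indicator 1 t := by
    ext t
    refine (hbα t).trans (Finset.sum_congr rfl fun i _ => ?_)
    by_cases h : dist t (θ i) ≤ α <;> simp [h, B]
  rw [hbα']
  exact abs_integral_sum_indicator_mul_sub_le hB hρ_int (fun i t _ => (hρ_pos t).le)
    (lipschitzWith_phi hLip s).continuous.aestronglyMeasurable θ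
    (fun i t ht => abs_phi_sub_phi_le hLip (hD s hs) ht) β z hz' hz_pos

/-- Replacing the sampled basis functions `φ(s;θᵢ)` by their normalized
local averages `b_α(θ) = Σᵢ (βᵢ/zᵢ) ρ(θ) 1{‖θ−θᵢ‖ ≤ α}` incurs a uniform error of at most
`L (D+1) α Σᵢ |βᵢ|`. -/
theorem stmt_12
    {d : ℕ} (Sset : Set (EuclideanSpace ℝ (Fin d)))
    (D : ℝ) (hD : ∀ s ∈ Sset, Real.sqrt (1 + ‖s‖ ^ 2) ≤ D + 1)
    (L : NNReal) (phibar : ℝ → ℝ) (hLip : LipschitzWith L phibar)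
    (hphibar_bdd : ∀ x, |phibar x| ≤ 1)
    (ρ : EuclideanSpace ℝ (Fin (d + 1)) → ℝ) (hρ_meas : Measurable ρ)
    (hρ_pos : ∀ θ, 0 < ρ θ) (hρ_prob : IsProbabilityMeasure (muRho d ρ))
    (N : ℕ) (θ : Fin N → EuclideanSpace ℝ (Fin (d + 1)))
    (α : ℝ) (hα0 : 0 < α)
    (β : Fin N → ℝ)
    (z : Fin N → ℝ)
    (hz : ∀ i, z i = (muRho d ρ (Metric.closedBall (θ i) α)).toReal)
    (hz_pos : ∀ i, 0 < z i)
    (bα : EuclideanSpace ℝ (Fin (d + 1)) → ℝ)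
    (hbα : ∀ t, bα t = ∑ i : Fin N, (β i / z i) * ρ t * (if dist t (θ i) ≤ α then 1 else 0)) :
    ∀ s ∈ Sset,
      |(∫ t, bα t * phi d phibar t s) - ∑ i : Fin N, β i * phi d phibar (θ i) s|
        ≤ (L : ℝ) * (D + 1) * α * ∑ i : Fin N, |β i| :=
  stmt_12_general Sset D hD L phibar hLip ρ hρ_meas hρ_pos N θ α β z hz hz_pos bα hbα
end
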